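/- arXiv:1710.06399 — 2 statements merged into one kernel-verified Lean document; each statement's English description precedes it below -/
import Mathlib

section
/- Let Q, D > 0 and μ > 1. Define w : [0,∞) → ℝ by w(r) = max{D, Q·r^{2μ}}. Let ψ be the solution of the ODE ψ''(r) = w(r)·ψ(r) for r > 0 with ψ(0) = 0 and ψ'(0) = 1. Then ψ is twice continuously differentiable on [0,∞), ψ is strictly positive on (0,∞) with lim_{r→∞} ψ(r) = +∞, ψ' is strictly positive on [0,∞), and lim_{r→∞} ψ'(r)/(r^μ · ψ(r)) = √Q. -/
/-!
Since `w ≥ 0`, `ψ` is convex wherever it is nonnegative; starting from `ψ 0 = 0`, `ψ' 0 = 1`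
this keeps `ψ' ≥ 1` and `ψ r ≥ r` on `[0, ∞)`. For large `r` the logarithmic derivative
`u = ψ' / ψ` solves the Riccati equation `u' = Q r^(2μ) - u²`, so `v = u / r^μ` solves
`v' = r^μ (Q - v²) - μ v / r`. Above any level `c > √Q`, and eventually below any level
`0 < c < √Q`, `v` moves towards `√Q` at a rate bounded away from `0`, so it is eventually
trapped in every neighbourhood of `√Q`.
-/

open Real Filter Set Topology

theorem contDiffOn_succ_Ici_iff_deriv {f : ℝ → ℝ} {a : ℝ} {n : ℕ}
    (hf : ∀ x ∈ Ici a, DifferentiableAt ℝ f x) :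
    ContDiffOn ℝ (n + 1) f (Ici a) ↔ ContDiffOn ℝ n (deriv f) (Ici a) := by
  have hderiv : EqOn (derivWithin f (Ici a)) (deriv f) (Ici a) := fun x hx =>
    (hf x hx).derivWithin (uniqueDiffOn_Ici a x hx)
  rw [contDiffOn_succ_iff_derivWithin (uniqueDiffOn_Ici a), contDiffOn_congr hderiv]
  exact ⟨fun h => h.2.2, fun h => ⟨fun x hx => (hf x hx).differentiableWithinAt, by simp, h⟩⟩

theorem contDiffOn_one_Ici_of_hasDerivAt {f g : ℝ → ℝ} {a : ℝ} (hf : ContinuousOn f (Ici a))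
    (hg : ContinuousOn g (Ici a)) (hfg : ∀ x ∈ Ioi a, HasDerivAt f (g x) x) :
    ContDiffOn ℝ 1 f (Ici a) := by
  have hderiv : ∀ x ∈ Ici a, HasDerivWithinAt f (g x) (Ici a) x := by
    intro x hx
    rcases (show a ≤ x from hx).eq_or_lt with rfl | hx
    · refine hasDerivWithinAt_Ici_of_tendsto_deriv
        (fun y hy => (hfg y hy).differentiableAt.differentiableWithinAt)
        ((hf a self_mem_Ici).mono Ioi_subset_Ici_self) self_mem_nhdsWithin ?_
      exact ((hg a self_mem_Ici).mono Ioi_subset_Ici_self).tendsto.congr'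
        (eventually_nhdsWithin_of_forall fun y hy => (hfg y hy).deriv.symm)
    · exact (hfg x hx).hasDerivWithinAt
  rw [contDiffOn_one_iff_derivWithin (uniqueDiffOn_Ici a)]
  exact ⟨fun x hx => (hderiv x hx).differentiableWithinAt,
    hg.congr fun x hx => (hderiv x hx).derivWithin (uniqueDiffOn_Ici a x hx)⟩

theorem nonneg_and_deriv_ge_mem_nhdsGT {f f' f'' : ℝ → ℝ} {a c x : ℝ}
    (hfc : ContinuousOn f (Ici a)) (hf'c : ContinuousOn f' (Ici a))
    (hf : ∀ y ∈ Ioi a, HasDerivAt f (f' y) y) (hf' : ∀ y ∈ Ioi a, HasDerivAt f' (f'' y) y)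
    (hf'' : ∀ y ∈ Ioi a, 0 ≤ f y → 0 ≤ f'' y) (hc : 0 < c) (hxa : a ≤ x)
    (hx : 0 ≤ f x) (hx' : c ≤ f' x) :
    {y | 0 ≤ f y ∧ c ≤ f' y} ∈ 𝓝[>] x := by
  have hpos : ∀ᶠ y in 𝓝[>] x, 0 < f' y :=
    nhdsWithin_mono _ (Ioi_subset_Ici hxa)
      ((hf'c x hxa).eventually (lt_mem_nhds (hc.trans_le hx')))
  obtain ⟨b, hxb, hpos⟩ := mem_nhdsGT_iff_exists_Ioo_subset.1 hpos
  have hsub : Icc x b ⊆ Ici a := fun y hy => hxa.trans hy.1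
  have hIoo : ∀ y ∈ interior (Icc x b), y ∈ Ioi a := fun y hy => by
    rw [interior_Icc] at hy
    exact hxa.trans_lt hy.1
  -- `f' > 0` makes `f` increase, hence stay nonnegative, hence `f'' ≥ 0` makes `f'` increase
  have hmono : MonotoneOn f (Icc x b) :=
    monotoneOn_of_hasDerivWithinAt_nonneg (convex_Icc x b) (hfc.mono hsub)
      (fun y hy => (hf y (hIoo y hy)).hasDerivWithinAt)
      (fun y hy => by rw [interior_Icc] at hy; exact (hpos hy).le)
  have hnonneg : ∀ y ∈ Icc x b, 0 ≤ f y := fun y hy =>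
    hx.trans (hmono (left_mem_Icc.2 hxb.le) hy hy.1)
  have hmono' : MonotoneOn f' (Icc x b) :=
    monotoneOn_of_hasDerivWithinAt_nonneg (convex_Icc x b) (hf'c.mono hsub)
      (fun y hy => (hf' y (hIoo y hy)).hasDerivWithinAt)
      (fun y hy => hf'' y (hIoo y hy) (hnonneg y (interior_subset hy)))
  filter_upwards [Ioo_mem_nhdsGT hxb] with y hy
  exact ⟨hnonneg y (Ioo_subset_Icc_self hy),
    hx'.trans (hmono' (left_mem_Icc.2 hxb.le) (Ioo_subset_Icc_self hy) hy.1.le)⟩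

theorem tangent_le_and_deriv_ge_of_convex_where_nonneg {f f' f'' : ℝ → ℝ} {a : ℝ}
    (hfc : ContinuousOn f (Ici a)) (hf'c : ContinuousOn f' (Ici a))
    (hf : ∀ x ∈ Ioi a, HasDerivAt f (f' x) x) (hf' : ∀ x ∈ Ioi a, HasDerivAt f' (f'' x) x)
    (hf'' : ∀ x ∈ Ioi a, 0 ≤ f x → 0 ≤ f'' x) (ha : 0 ≤ f a) (ha' : 0 < f' a) :
    ∀ x ∈ Ici a, f a + f' a * (x - a) ≤ f x ∧ f' a ≤ f' x := by
  set s := {x | 0 ≤ f x ∧ f' a ≤ f' x}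
  have hs : Ici a ⊆ s := by
    intro x hx
    have hclosed : IsClosed (s ∩ Icc a x) := by
      have h₁ := (hfc.mono Icc_subset_Ici_self).preimage_isClosed_of_isClosed
        (isClosed_Icc (a := a) (b := x)) (isClosed_Ici (a := 0))
      have h₂ := (hf'c.mono Icc_subset_Ici_self).preimage_isClosed_of_isClosed
        (isClosed_Icc (a := a) (b := x)) (isClosed_Ici (a := f' a))
      convert h₁.inter h₂ using 1
      ext y
      simp only [s, mem_inter_iff, mem_ofPred_eq, mem_preimage, mem_Ici]
      tauto
    exact IsClosed.Icc_subset_of_forall_mem_nhdsWithin hclosed ⟨ha, le_rfl⟩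
      (fun y hy => nonneg_and_deriv_ge_mem_nhdsGT hfc hf'c hf hf' hf'' ha' hy.2.1 hy.1.1 hy.1.2)
      ⟨hx, le_rfl⟩
  intro x hx
  have htangent := (convex_Ici a).mul_sub_le_image_sub_of_le_deriv hfc
    (fun y hy => (hf y (interior_Ici (a := a) ▸ hy)).differentiableAt.differentiableWithinAt)
    (fun y hy => (hf y (interior_Ici (a := a) ▸ hy)).deriv ▸ (hs (interior_subset hy)).2)
    a self_mem_Ici x hx hx
  exact ⟨by linarith, (hs hx).2⟩

theorem eventually_le_of_hasDerivAt_le_neg {f f' : ℝ → ℝ} {c δ : ℝ} (hδ : 0 < δ)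
    (hf : ∀ᶠ x in atTop, HasDerivAt f (f' x) x)
    (hf' : ∀ᶠ x in atTop, c ≤ f x → f' x ≤ -δ) :
    ∀ᶠ x in atTop, f x ≤ c := by
  obtain ⟨R, hR⟩ := eventually_atTop.1 (hf.and hf')
  have hcont : ∀ a b, R ≤ a → ContinuousOn f (Icc a b) := fun a b ha x hx =>
    (hR x (ha.trans hx.1)).1.continuousAt.continuousWithinAt
  have hderiv : ∀ a b, R ≤ a → ∀ x ∈ Ico a b, HasDerivWithinAt f (f' x) (Ici x) x :=
    fun a b ha x hx => (hR x (ha.trans hx.1)).1.hasDerivWithinAt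
  obtain ⟨r, hrR, hr⟩ : ∃ r ≥ R, f r ≤ c := by
    by_contra! hgt
    -- above `c` the function decreases at rate `δ`, so it reaches `c` by time `b`
    set b := R + (f R - c) / δ + 1
    have hRb : R ≤ b := by
      have : 0 ≤ (f R - c) / δ := div_nonneg (sub_nonneg.2 (hgt R le_rfl).le) hδ.le
      linarith
    have hb := image_le_of_deriv_right_le_deriv_boundary (hcont R b le_rfl) (hderiv R b le_rfl)
      (B := fun x => f R - δ * (x - R)) (B' := fun _ => -δ) (by simp) (by fun_prop)
      (fun x _ => by
        simpa using (((hasDerivAt_id x).sub_const R).const_mul δ).const_sub (f R)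
          |>.hasDerivWithinAt)
      (fun x hx => (hR x hx.1).2 (hgt x hx.1).le) (right_mem_Icc.2 hRb)
    have hδb : δ * (b - R) = f R - c + δ := by
      simp only [b]
      field_simp
      ring
    linarith [hgt b hRb]
  filter_upwards [eventually_ge_atTop r] with x hx
  exact image_le_of_deriv_right_lt_deriv_boundary' (hcont r x hrR) (hderiv r x hrR) hr
    (B' := fun _ => 0) continuousOn_const (fun y _ => hasDerivWithinAt_const y _ c)
    (fun y hy hy' => ((hR y (hrR.trans hy.1)).2 hy'.ge).trans_lt (neg_neg_of_pos hδ))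
    (right_mem_Icc.2 hx)

theorem hasDerivAt_logDeriv_of_hasDerivAt_deriv {f : ℝ → ℝ} {x w : ℝ}
    (hf : DifferentiableAt ℝ f x) (hf' : HasDerivAt (deriv f) (w * f x) x) (hx : f x ≠ 0) :
    HasDerivAt (logDeriv f) (w - logDeriv f x ^ 2) x := by
  rw [show logDeriv f = fun y => deriv f y / f y from funext (logDeriv_apply f)]
  refine (hf'.div hf.hasDerivAt hx).congr_deriv ?_
  field_simp

theorem hasDerivAt_div_rpow_of_riccati {u : ℝ → ℝ} {Q μ r : ℝ} (hr : 0 < r)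
    (hu : HasDerivAt u (Q * r ^ (2 * μ) - u r ^ 2) r) :
    HasDerivAt (fun y => u y / y ^ μ)
      (r ^ μ * (Q - (u r / r ^ μ) ^ 2) - μ * (u r / r ^ μ) / r) r := by
  have hp : 0 < r ^ μ := rpow_pos_of_pos hr μ
  refine (hu.div (hasDerivAt_rpow_const (Or.inl hr.ne')) hp.ne').congr_deriv ?_
  rw [rpow_sub_one hr.ne', two_mul, rpow_add hr]
  field_simp

theorem tendsto_div_rpow_of_riccati {u : ℝ → ℝ} {Q μ : ℝ} (hQ : 0 < Q) (hμ : 0 ≤ μ)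
    (hu : ∀ᶠ r in atTop, HasDerivAt u (Q * r ^ (2 * μ) - u r ^ 2) r)
    (hu₀ : ∀ᶠ r in atTop, 0 ≤ u r) :
    Tendsto (fun r => u r / r ^ μ) atTop (𝓝 (√Q)) := by
  set v := fun r => u r / r ^ μ
  set v' := fun r => r ^ μ * (Q - v r ^ 2) - μ * v r / r
  have hv : ∀ᶠ r in atTop, HasDerivAt v (v' r) r := by
    filter_upwards [hu, eventually_gt_atTop 0] with r hr hr₀
    exact hasDerivAt_div_rpow_of_riccati hr₀ hr
  have hv₀ : ∀ᶠ r in atTop, 0 ≤ v r := by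
    filter_upwards [hu₀, eventually_ge_atTop 0] with r h hr
    exact div_nonneg h (rpow_nonneg hr μ)
  have hr₁ : ∀ᶠ r : ℝ in atTop, 1 ≤ r ^ μ := by
    filter_upwards [eventually_ge_atTop 1] with r hr
    exact one_le_rpow hr hμ
  have hQ' := sq_sqrt hQ.le
  rw [tendsto_order]
  constructor
  · intro a ha
    obtain ⟨c, hac, hcQ⟩ := exists_between (max_lt ha (sqrt_pos.2 hQ))
    have hc : 0 < c := (le_max_right a 0).trans_lt hac
    have hc2 : c ^ 2 < Q := hQ' ▸ pow_lt_pow_left₀ hcQ hc.le two_ne_zero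
    set δ := (Q - c ^ 2) / 2
    have hδ : 0 < δ := half_pos (sub_pos.2 hc2)
    -- below `c`, `v' ≥ 2δ - μ c / r`, and the last term is eventually at most `δ`
    have hlow := eventually_le_of_hasDerivAt_le_neg (f := fun r => -v r) (f' := fun r => -v' r)
      hδ (hv.mono fun r h => h.neg) (c := -c) ?_
    · filter_upwards [hlow] with r hr
      exact (le_max_left a 0).trans_lt (hac.trans_le (neg_le_neg_iff.1 hr))
    filter_upwards [hv₀, hr₁, eventually_gt_atTop 0, eventually_ge_atTop (μ * c / δ)]
      with r h₀ h₁ hr hrc hvc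
    have hvc : v r ≤ c := neg_le_neg_iff.1 hvc
    have hμc : μ * c ≤ δ * r := (div_le_iff₀' hδ).1 hrc
    have hdrift : μ * v r / r ≤ δ := by
      rw [div_le_iff₀ hr]
      nlinarith [mul_le_mul_of_nonneg_left hvc hμ]
    have hv2 : v r ^ 2 ≤ c ^ 2 := pow_le_pow_left₀ h₀ hvc 2
    have hmain : 2 * δ ≤ r ^ μ * (Q - v r ^ 2) :=
      calc 2 * δ ≤ Q - v r ^ 2 := by simp only [δ]; linarith
        _ ≤ r ^ μ * (Q - v r ^ 2) := le_mul_of_one_le_left (by linarith) h₁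
    simp only [v', neg_le_neg_iff]
    linarith
  · intro a ha
    obtain ⟨c, hQc, hca⟩ := exists_between ha
    have hc : 0 < c := (sqrt_pos.2 hQ).trans hQc
    have hδ : 0 < c ^ 2 - Q := sub_pos.2 (hQ' ▸ pow_lt_pow_left₀ hQc (sqrt_nonneg Q) two_ne_zero)
    have hup := eventually_le_of_hasDerivAt_le_neg (c := c) hδ hv ?_
    · filter_upwards [hup] with r hr
      exact hr.trans_lt hca
    filter_upwards [hv₀, hr₁, eventually_gt_atTop 0] with r h₀ h₁ hr hcv
    have hdrift : 0 ≤ μ * v r / r := by positivity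
    have hv2 : c ^ 2 ≤ v r ^ 2 := pow_le_pow_left₀ hc.le hcv 2
    have hmain : r ^ μ * (Q - v r ^ 2) ≤ 1 * (Q - v r ^ 2) :=
      mul_le_mul_of_nonpos_right h₁ (by linarith)
    simp only [v']
    linarith

theorem tendsto_deriv_div_rpow_mul_of_ode {ψ : ℝ → ℝ} {Q μ : ℝ} (hQ : 0 < Q) (hμ : 0 ≤ μ)
    (hψ : ∀ᶠ r in atTop, DifferentiableAt ℝ ψ r)
    (hψ'' : ∀ᶠ r in atTop, HasDerivAt (deriv ψ) (Q * r ^ (2 * μ) * ψ r) r)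
    (hψ₀ : ∀ᶠ r in atTop, 0 < ψ r) (hψ' : ∀ᶠ r in atTop, 0 ≤ deriv ψ r) :
    Tendsto (fun r => deriv ψ r / (r ^ μ * ψ r)) atTop (𝓝 √Q) := by
  refine (tendsto_div_rpow_of_riccati (u := logDeriv ψ) hQ hμ ?_ ?_).congr fun r => ?_
  · filter_upwards [hψ, hψ'', hψ₀] with r h h'' h₀
    exact hasDerivAt_logDeriv_of_hasDerivAt_deriv h h'' h₀.ne'
  · filter_upwards [hψ₀, hψ'] with r h₀ h'
    exact (logDeriv_apply ψ r).symm ▸ div_nonneg h' h₀.le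
  · rw [logDeriv_apply, div_div, mul_comm]

theorem stmt_1_general (Q D μ : ℝ) (hQ : 0 < Q) (hμ : 1 < μ)
    (w : ℝ → ℝ)
    (hw : ∀ r : ℝ, 0 ≤ r → w r = max D (Q * r ^ (2 * μ)))
    (ψ : ℝ → ℝ)
    (hψC1 : ContDiffOn ℝ 1 ψ (Set.Ici 0))
    (hψd2 : ∀ r : ℝ, 0 < r → DifferentiableAt ℝ (deriv ψ) r)
    (hψ0 : ψ 0 = 0) (hψ'0 : deriv ψ 0 = 1)
    (hode : ∀ r : ℝ, 0 < r → deriv (deriv ψ) r = w r * ψ r) :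
    ContDiffOn ℝ 2 ψ (Set.Ici 0) ∧
    (∀ r : ℝ, 0 < r → 0 < ψ r) ∧
    Filter.Tendsto ψ Filter.atTop Filter.atTop ∧
    (∀ r : ℝ, 0 ≤ r → 0 < deriv ψ r) ∧
    Filter.Tendsto (fun r : ℝ => deriv ψ r / (r ^ μ * ψ r)) Filter.atTop
      (nhds (Real.sqrt Q)) := by
  have hψd : ∀ x ∈ Ici (0 : ℝ), DifferentiableAt ℝ ψ x := by
    intro x hx
    rcases (show 0 ≤ x from hx).eq_or_lt with rfl | hx
    · exact differentiableAt_of_deriv_ne_zero (hψ'0 ▸ one_ne_zero)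
    · exact (hψC1.differentiableOn one_ne_zero x hx.le).differentiableAt (Ici_mem_nhds hx)
  have hψ'c : ContinuousOn (deriv ψ) (Ici 0) :=
    ((contDiffOn_succ_Ici_iff_deriv (n := 0) hψd).1 hψC1).continuousOn
  have hψ'' : ∀ r ∈ Ioi (0 : ℝ), HasDerivAt (deriv ψ) (w r * ψ r) r := fun r hr =>
    hode r hr ▸ (hψd2 r hr).hasDerivAt
  have hwc : ContinuousOn w (Ici 0) := by
    have := continuous_rpow_const (q := 2 * μ) (by linarith)
    exact (by fun_prop : Continuous fun r : ℝ => max D (Q * r ^ (2 * μ))).continuousOn.congr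
      fun r hr => hw r hr
  have hw₀ : ∀ r ∈ Ioi (0 : ℝ), 0 ≤ w r := fun r hr =>
    hw r hr.le ▸ le_max_of_le_right (mul_nonneg hQ.le (rpow_nonneg hr.le _))
  have hwQ : ∀ᶠ r in atTop, w r = Q * r ^ (2 * μ) := by
    filter_upwards [eventually_ge_atTop 0,
      ((tendsto_rpow_atTop (y := 2 * μ) (by linarith)).const_mul_atTop hQ).eventually_ge_atTop D]
      with r hr hD using (hw r hr).trans (max_eq_right hD)
  have hmono := tangent_le_and_deriv_ge_of_convex_where_nonneg hψC1.continuousOn hψ'c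
    (fun r hr => (hψd r (Ioi_subset_Ici_self hr)).hasDerivAt) hψ''
    (fun r hr h => mul_nonneg (hw₀ r hr) h) hψ0.ge (hψ'0 ▸ one_pos)
  simp only [hψ0, hψ'0, zero_add, one_mul, sub_zero] at hmono
  have hψpos : ∀ r : ℝ, 0 < r → 0 < ψ r := fun r hr => hr.trans_le (hmono r hr.le).1
  have hψ'pos : ∀ r : ℝ, 0 ≤ r → 0 < deriv ψ r := fun r hr => one_pos.trans_le (hmono r hr).2
  refine ⟨(contDiffOn_succ_Ici_iff_deriv (n := 1) hψd).2
      (contDiffOn_one_Ici_of_hasDerivAt hψ'c (hwc.mul hψC1.continuousOn) hψ''),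
    hψpos, tendsto_atTop_mono' _ ((eventually_ge_atTop 0).mono fun r hr => (hmono r hr).1) tendsto_id, hψ'pos,
    tendsto_deriv_div_rpow_mul_of_ode hQ (by linarith) ?_ ?_ ?_ ?_⟩
  · exact (eventually_ge_atTop 0).mono hψd
  · filter_upwards [hwQ, eventually_gt_atTop 0] with r hwr hr using hwr ▸ hψ'' r hr
  · exact (eventually_gt_atTop 0).mono hψpos
  · exact (eventually_ge_atTop 0).mono fun r hr => (hψ'pos r hr).le

/-- Lemma 4.2-type ODE comparison lemma (Lemma `lem: ode-comparison-2`):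
the model function `ψ` solving `ψ'' = w ψ`, `ψ(0)=0`, `ψ'(0)=1`, with the coefficient
`w(r) = max{D, Q r^(2μ)}`, is `C²` on `[0,∞)`, positive and increasing, diverges at
infinity, and satisfies `ψ'(r)/(r^μ ψ(r)) → √Q`. -/
theorem stmt_1 (Q D μ : ℝ) (hQ : 0 < Q) (hD : 0 < D) (hμ : 1 < μ)
    (w : ℝ → ℝ)
    (hw : ∀ r : ℝ, 0 ≤ r → w r = max D (Q * r ^ (2 * μ)))
    (ψ : ℝ → ℝ)
    (hψC1 : ContDiffOn ℝ 1 ψ (Set.Ici 0))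
    (hψd2 : ∀ r : ℝ, 0 < r → DifferentiableAt ℝ (deriv ψ) r)
    (hψ0 : ψ 0 = 0) (hψ'0 : deriv ψ 0 = 1)
    (hode : ∀ r : ℝ, 0 < r → deriv (deriv ψ) r = w r * ψ r) :
    ContDiffOn ℝ 2 ψ (Set.Ici 0) ∧
    (∀ r : ℝ, 0 < r → 0 < ψ r) ∧
    Filter.Tendsto ψ Filter.atTop Filter.atTop ∧
    (∀ r : ℝ, 0 ≤ r → 0 < deriv ψ r) ∧
    Filter.Tendsto (fun r : ℝ => deriv ψ r / (r ^ μ * ψ r)) Filter.atTop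
      (nhds (Real.sqrt Q)) :=
  stmt_1_general Q D μ hQ hμ w hw ψ hψC1 hψd2 hψ0 hψ'0 hode
end

section
/- Let n ≥ 3 be an integer and let m > 1, ν > 1, K₁, K₂ > 0 with K₁ ≤ K₂. Let ρ : ℝⁿ → (0,∞) be a measurable function satisfying K₁·|x|^{−2}·(log|x|)^{−ν} ≤ ρ(x) ≤ K₂·|x|^{−2}·(log|x|)^{−ν} for all |x| ≥ 2. Then there exist constants C₁ > 0, γ₁ > 0, R₀ > 2 and t₀ > e such that the function u̲(x,t) := C₁·(t+t₀)^{−1/(m−1)}·[(log|x|)^{−(ν−1)} − γ₁·(log(t+t₀))^{−(ν−1)}]₊^{1/(m−1)} satisfies ρ(x)·∂_t u̲(x,t) ≤ Δ_x(u̲^m)(x,t) at every point (x,t) with |x| > R₀, t > 0 and (log|x|)^{−(ν−1)} > γ₁·(log(t+t₀))^{−(ν−1)}. -/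
open Real Filter Set MeasureTheory

/-- The Euclidean Laplacian of a scalar function, as the sum of second directional
derivatives along the standard orthonormal basis of `ℝⁿ`. -/
noncomputable def euclideanLaplacian (n : ℕ) (φ : EuclideanSpace ℝ (Fin n) → ℝ)
    (x : EuclideanSpace ℝ (Fin n)) : ℝ :=
  ∑ i : Fin n, fderiv ℝ (fun y => fderiv ℝ φ y (EuclideanSpace.single i 1)) x
    (EuclideanSpace.single i 1)

/-!
Write `p = 1/(m-1)`, `β = ν-1`, `s = log|x|`, `T = t+t₀`, `L = log T` and `b = s^(-β) - γ L^(-β)`.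
Then `ρ ∂ₜu̲ = ρ C p T^(-p-1) b^(p-1) (γβ L^(-ν) - b)`, while `u̲^m = C^m T^(-p-1) b^(p+1)` is a
function of `log|x|`, and `Δ F(log|x|) = (F'' + (n-2) F') / |x|²` gives
`Δ u̲^m = C^m (p+1) β T^(-p-1) b^(p-1) |x|^(-2) (βp s^(-2ν) + ν s^(-ν-1) b - (n-2) s^(-ν) b)`.
With `E = K₁/(n-2)` and `C^(m-1) (p+1) β = p E`, the lower bound on `ρ` lets `-ρ b` dominate the
drift term `-(n-2) s^(-ν) b`; with `γ^(1/β) = K₂/(p E)`, the upper bound on `ρ` and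
`γ L^(-β) < s^(-β)` let the nonlinear term `βp s^(-2ν)` dominate `ρ γβ L^(-ν)`.
-/

open Topology

section Radial

variable {n : ℕ} {x : EuclideanSpace ℝ (Fin n)} {φ : EuclideanSpace ℝ (Fin n) → ℝ}

theorem euclideanLaplacian_eq_of_eventuallyEq_comp_norm_sq {g g' : ℝ → ℝ} {g'' : ℝ}
    (hφ : φ =ᶠ[𝓝 x] fun y => g (‖y‖ ^ 2))
    (hg : ∀ᶠ σ in 𝓝 (‖x‖ ^ 2), HasDerivAt g (g' σ) σ)
    (hg' : HasDerivAt g' g'' (‖x‖ ^ 2)) :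
    euclideanLaplacian n φ x = 2 * n * g' (‖x‖ ^ 2) + 4 * ‖x‖ ^ 2 * g'' := by
  have hq (y : EuclideanSpace ℝ (Fin n)) :
      HasFDerivAt (fun z : EuclideanSpace ℝ (Fin n) => ‖z‖ ^ 2) (2 • innerSL ℝ y) y :=
    (hasStrictFDerivAt_norm_sq y).hasFDerivAt
  have hfirst (i : Fin n) : (fun y => fderiv ℝ φ y (EuclideanSpace.single i 1)) =ᶠ[𝓝 x]
      fun y => 2 * g' (‖y‖ ^ 2) * y i := by
    have hg_near : ∀ᶠ y in 𝓝 x, HasDerivAt g (g' (‖y‖ ^ 2)) (‖y‖ ^ 2) :=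
      (continuous_norm.pow 2).continuousAt.tendsto.eventually hg
    filter_upwards [hφ.eventuallyEq_nhds, hg_near] with y hφy hgy
    rw [((hgy.comp_hasFDerivAt y (hq y)).congr_of_eventuallyEq hφy).fderiv]
    simp only [smul_apply, coe_innerSL_apply,
      EuclideanSpace.inner_single_right, ringHom_apply, one_mul, nsmul_eq_mul, Nat.cast_ofNat,
      smul_eq_mul]
    ring
  have hsecond (i : Fin n) :
      fderiv ℝ (fun y => fderiv ℝ φ y (EuclideanSpace.single i 1)) x
        (EuclideanSpace.single i 1) = 4 * g'' * x i ^ 2 + 2 * g' (‖x‖ ^ 2) := by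
    have hcoord : HasFDerivAt (fun y : EuclideanSpace ℝ (Fin n) => y i)
        (EuclideanSpace.proj i : EuclideanSpace ℝ (Fin n) →L[ℝ] ℝ) x :=
      (EuclideanSpace.proj i : EuclideanSpace ℝ (Fin n) →L[ℝ] ℝ).hasFDerivAt
    have hψ : HasFDerivAt (fun y : EuclideanSpace ℝ (Fin n) => 2 * g' (‖y‖ ^ 2) * y i) _ x :=
      ((hg'.comp_hasFDerivAt x (hq x)).const_mul 2).mul hcoord
    rw [(hfirst i).fderiv_eq, hψ.fderiv]
    simp only [Function.comp_apply, add_apply,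
      smul_apply, PiLp.proj_apply, PiLp.single_eq_same, smul_eq_mul, mul_one,
      coe_innerSL_apply, EuclideanSpace.inner_single_right, ringHom_apply, one_mul, nsmul_eq_mul,
      Nat.cast_ofNat]
    ring
  have hsum : ∑ i, x i ^ 2 = ‖x‖ ^ 2 := by
    simp only [EuclideanSpace.norm_sq_eq, norm_eq_abs, sq_abs]
  simp only [euclideanLaplacian, hsecond, Finset.sum_add_distrib, ← Finset.mul_sum, hsum,
    Finset.sum_const, Finset.card_univ, Fintype.card_fin, nsmul_eq_mul]
  ring

theorem euclideanLaplacian_eq_of_eventuallyEq_comp_log_norm {G G' : ℝ → ℝ} {G'' : ℝ}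
    (hx : x ≠ 0) (hφ : φ =ᶠ[𝓝 x] fun y => G (log ‖y‖))
    (hG : ∀ᶠ s in 𝓝 (log ‖x‖), HasDerivAt G (G' s) s)
    (hG' : HasDerivAt G' G'' (log ‖x‖)) :
    euclideanLaplacian n φ x = (G'' + (n - 2) * G' (log ‖x‖)) / ‖x‖ ^ 2 := by
  have hlog_sq (r : ℝ) : log (r ^ 2) / 2 = log r := by
    rw [Real.log_pow]; push_cast; ring
  have hσ : 0 < ‖x‖ ^ 2 := by positivity
  have hhalf_log {σ : ℝ} (hσ : σ ≠ 0) : HasDerivAt (fun τ => log τ / 2) (σ⁻¹ / 2) σ :=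
    (hasDerivAt_log hσ).div_const 2
  have hg : ∀ᶠ σ in 𝓝 (‖x‖ ^ 2),
      HasDerivAt (fun τ => G (log τ / 2)) (G' (log σ / 2) / (2 * σ)) σ := by
    have hcont : ContinuousAt (fun τ => log τ / 2) (‖x‖ ^ 2) :=
      (hhalf_log hσ.ne').continuousAt
    have hG_near : ∀ᶠ σ in 𝓝 (‖x‖ ^ 2), HasDerivAt G (G' (log σ / 2)) (log σ / 2) := by
      rw [← hlog_sq] at hG
      exact hcont.tendsto.eventually hG
    filter_upwards [hG_near, eventually_ne_nhds hσ.ne'] with σ hGσ hσ0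
    exact (hGσ.comp σ (hhalf_log hσ0)).congr_deriv (by field_simp)
  have hg' : HasDerivAt (fun σ => G' (log σ / 2) / (2 * σ))
      ((G'' - 2 * G' (log ‖x‖)) / (4 * (‖x‖ ^ 2) ^ 2)) (‖x‖ ^ 2) := by
    rw [← hlog_sq] at hG'
    refine ((hG'.comp (‖x‖ ^ 2) (hhalf_log hσ.ne')).div
      ((hasDerivAt_id' (‖x‖ ^ 2)).const_mul 2) (by positivity)).congr_deriv ?_
    simp only [Function.comp_apply, hlog_sq]
    field_simp
    ring
  rw [euclideanLaplacian_eq_of_eventuallyEq_comp_norm_sq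
    (hφ.trans (.of_forall fun y => by simp only [hlog_sq])) hg hg', hlog_sq]
  field_simp
  ring

end Radial

section Profile

variable {β k q s : ℝ}

theorem hasDerivAt_rpow_neg_sub_rpow (hs : 0 < s) (hb : 0 < s ^ (-β) - k) :
    HasDerivAt (fun σ => (σ ^ (-β) - k) ^ q)
      (-(q * β) * s ^ (-β - 1) * (s ^ (-β) - k) ^ (q - 1)) s := by
  refine ((((hasDerivAt_id' s).rpow_const (Or.inl hs.ne')).sub_const k).rpow_const
    (Or.inl hb.ne')).congr_deriv ?_
  ring

theorem hasDerivAt_deriv_rpow_neg_sub_rpow (hs : 0 < s) (hb : 0 < s ^ (-β) - k) :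
    HasDerivAt (fun σ => -(q * β) * σ ^ (-β - 1) * (σ ^ (-β) - k) ^ (q - 1))
      (q * β * ((β + 1) * s ^ (-β - 2) * (s ^ (-β) - k) ^ (q - 1)
        + β * (q - 1) * s ^ (-β - 1) * s ^ (-β - 1) * (s ^ (-β) - k) ^ (q - 2))) s := by
  have hpow (e : ℝ) : HasDerivAt (fun σ => σ ^ e) (e * s ^ (e - 1)) s := by
    simpa only [one_mul] using (hasDerivAt_id' s).rpow_const (p := e) (Or.inl hs.ne')
  refine (((hpow (-β - 1)).const_mul (-(q * β))).mul
    (((hpow (-β)).sub_const k).rpow_const (Or.inl hb.ne'))).congr_deriv ?_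
  rw [show -β - 1 - 1 = -β - 2 by ring, show q - 1 - 1 = q - 2 by ring]
  ring

end Profile

theorem rpow_mul_mul_rpow_neg_sub_one_le {γ L s β : ℝ} (hβ : 0 < β) (hγ : 0 ≤ γ) (hL : 0 < L)
    (hs : 0 < s) (h : γ * L ^ (-β) ≤ s ^ (-β)) :
    γ * γ ^ β⁻¹ * L ^ (-β - 1) ≤ s ^ (-β - 1) := by
  have hexp : -β * ((β + 1) / β) = -β - 1 := by field_simp; ring
  have hpow := rpow_le_rpow (by positivity) h (by positivity : 0 ≤ (β + 1) / β)
  rwa [mul_rpow hγ (by positivity), ← rpow_mul hL.le, ← rpow_mul hs.le, hexp,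
    add_div, div_self hβ.ne', one_div, rpow_add' hγ (by positivity), rpow_one] at hpow

theorem weight_mul_le_of_bounds {ρ K₁ K₂ E γ β p N r2 w v ℓ b : ℝ}
    (hlow : K₁ * w / r2 ≤ ρ) (hup : ρ ≤ K₂ * w / r2) (hgain : K₂ * γ * ℓ ≤ E * p * w)
    (hEN : E * N = K₁) (hr2 : 0 < r2) (hE : 0 ≤ E) (hβ : 0 ≤ β) (hγ : 0 ≤ γ) (hℓ : 0 ≤ ℓ)
    (hw : 0 ≤ w) (hv : 0 ≤ v) (hb : 0 ≤ b) :
    ρ * (γ * β * ℓ - b) ≤ E / r2 * (β * p * w * w + (β + 1) * v * b - N * w * b) := by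
  have hgain_le : ρ * (γ * β * ℓ) ≤ E / r2 * (β * p * w * w) := calc
    ρ * (γ * β * ℓ) ≤ K₂ * w / r2 * (γ * β * ℓ) := mul_le_mul_of_nonneg_right hup (by positivity)
    _ = β * w / r2 * (K₂ * γ * ℓ) := by ring
    _ ≤ β * w / r2 * (E * p * w) := mul_le_mul_of_nonneg_left hgain (by positivity)
    _ = E / r2 * (β * p * w * w) := by ring
  have hloss_le : E / r2 * (N * w * b) ≤ ρ * b := calc
    E / r2 * (N * w * b) = K₁ * w / r2 * b := by rw [← hEN]; ring
    _ ≤ ρ * b := mul_le_mul_of_nonneg_right hlow hb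
  have hdiffusion : 0 ≤ E / r2 * ((β + 1) * v * b) := by positivity
  linarith

section Barrier

variable {n : ℕ}

noncomputable def barrierBracket (γ t₀ β : ℝ) (x : EuclideanSpace ℝ (Fin n)) (t : ℝ) : ℝ :=
  log ‖x‖ ^ (-β) - γ * log (t + t₀) ^ (-β)

/-- `barrier C γ t₀ β p` is `u̲` with `C₁ = C`, `γ₁ = γ`, `β = ν - 1` and `p = 1/(m-1)`. -/
noncomputable def barrier (C γ t₀ β p : ℝ) (x : EuclideanSpace ℝ (Fin n)) (t : ℝ) : ℝ :=
  C * (t + t₀) ^ (-p) * max (barrierBracket γ t₀ β x t) 0 ^ p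

variable {C γ t₀ β p m t : ℝ} {x : EuclideanSpace ℝ (Fin n)}

theorem hasDerivAt_barrierBracket_time (hT : 1 < t + t₀) :
    HasDerivAt (barrierBracket γ t₀ β x)
      (γ * β * log (t + t₀) ^ (-β - 1) / (t + t₀)) t := by
  have hL : 0 < log (t + t₀) := log_pos hT
  have hlog : HasDerivAt (fun τ => log (τ + t₀)) (1 / (t + t₀)) t :=
    ((hasDerivAt_id' t).add_const t₀).log (by linarith)
  refine (((hlog.rpow_const (p := -β) (Or.inl hL.ne')).const_mul γ).const_sub _).congr_deriv ?_
  ring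

theorem hasDerivAt_barrier_time (hT : 1 < t + t₀) (hb : 0 < barrierBracket γ t₀ β x t) :
    HasDerivAt (fun τ => barrier C γ t₀ β p x τ)
      (C * p * (t + t₀) ^ (-p - 1) * barrierBracket γ t₀ β x t ^ (p - 1) *
        (γ * β * log (t + t₀) ^ (-β - 1) - barrierBracket γ t₀ β x t)) t := by
  have hT0 : 0 < t + t₀ := by linarith
  have hbracket := hasDerivAt_barrierBracket_time (x := x) (γ := γ) (β := β) hT
  have hb_near : ∀ᶠ τ in 𝓝 t, 0 < barrierBracket γ t₀ β x τ :=
    hbracket.continuousAt.eventually (lt_mem_nhds hb)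
  have heq : (fun τ => C * (τ + t₀) ^ (-p) * barrierBracket γ t₀ β x τ ^ p) =ᶠ[𝓝 t]
      fun τ => barrier C γ t₀ β p x τ := by
    filter_upwards [hb_near] with τ hτ
    rw [barrier, max_eq_left hτ.le]
  refine ((((hasDerivAt_id' t).add_const t₀).rpow_const (p := -p) (Or.inl hT0.ne')).const_mul C
    |>.mul (hbracket.rpow_const (p := p) (Or.inl hb.ne'))).congr_of_eventuallyEq heq.symm
    |>.congr_deriv ?_
  rw [rpow_sub_one hT0.ne', rpow_sub_one hb.ne']
  field_simp
  ring

theorem eventually_barrierBracket_pos (hx : 1 < ‖x‖) (hb : 0 < barrierBracket γ t₀ β x t) :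
    ∀ᶠ y in 𝓝 x, 0 < barrierBracket γ t₀ β y t := by
  have hs : 0 < log ‖x‖ := log_pos hx
  have hcont : ContinuousAt (fun y : EuclideanSpace ℝ (Fin n) => barrierBracket γ t₀ β y t) x :=
    (((continuousAt_log (by positivity)).comp continuous_norm.continuousAt).rpow_const
      (Or.inl hs.ne')).sub continuousAt_const
  exact hcont.eventually (lt_mem_nhds hb)

theorem barrier_rpow_eq (hC : 0 < C) (hpm : p * (m - 1) = 1) (hT : 0 < t + t₀)
    (hb : 0 < barrierBracket γ t₀ β x t) :
    barrier C γ t₀ β p x t ^ m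
      = C ^ m * (t + t₀) ^ (-p - 1) * barrierBracket γ t₀ β x t ^ (p + 1) := by
  have hpm' : p * m = p + 1 := by linear_combination hpm
  rw [barrier, max_eq_left hb.le, mul_rpow (by positivity) (by positivity),
    mul_rpow hC.le (by positivity), ← rpow_mul hT.le, ← rpow_mul hb.le, neg_mul, hpm', neg_add']

theorem euclideanLaplacian_barrier_rpow (hC : 0 < C) (hpm : p * (m - 1) = 1) (hx : 1 < ‖x‖)
    (hT : 0 < t + t₀) (hb : 0 < barrierBracket γ t₀ β x t) :
    euclideanLaplacian n (fun y => barrier C γ t₀ β p y t ^ m) x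
      = C ^ m * ((p + 1) * β) * (t + t₀) ^ (-p - 1) * barrierBracket γ t₀ β x t ^ (p - 1)
        / ‖x‖ ^ 2 * (β * p * log ‖x‖ ^ (-β - 1) * log ‖x‖ ^ (-β - 1)
          + (β + 1) * log ‖x‖ ^ (-β - 2) * barrierBracket γ t₀ β x t
          - (n - 2) * log ‖x‖ ^ (-β - 1) * barrierBracket γ t₀ β x t) := by
  have hs : 0 < log ‖x‖ := log_pos hx
  have hb_def : barrierBracket γ t₀ β x t = log ‖x‖ ^ (-β) - γ * log (t + t₀) ^ (-β) := rfl
  rw [hb_def] at hb ⊢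
  have hφ : (fun y => barrier C γ t₀ β p y t ^ m) =ᶠ[𝓝 x] fun y =>
      C ^ m * (t + t₀) ^ (-p - 1) * (log ‖y‖ ^ (-β) - γ * log (t + t₀) ^ (-β)) ^ (p + 1) := by
    filter_upwards [eventually_barrierBracket_pos hx hb] with y hy
    exact barrier_rpow_eq hC hpm hT hy
  have hcont : ContinuousAt (fun σ => σ ^ (-β) - γ * log (t + t₀) ^ (-β)) (log ‖x‖) :=
    (continuousAt_id.rpow_const (Or.inl hs.ne')).sub continuousAt_const
  have hG : ∀ᶠ σ in 𝓝 (log ‖x‖), HasDerivAt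
      (fun σ => C ^ m * (t + t₀) ^ (-p - 1) * (σ ^ (-β) - γ * log (t + t₀) ^ (-β)) ^ (p + 1))
      (C ^ m * (t + t₀) ^ (-p - 1) * (-((p + 1) * β) * σ ^ (-β - 1)
        * (σ ^ (-β) - γ * log (t + t₀) ^ (-β)) ^ (p + 1 - 1))) σ := by
    filter_upwards [lt_mem_nhds hs, hcont.eventually (lt_mem_nhds hb)] with σ hσ hbσ
    exact (hasDerivAt_rpow_neg_sub_rpow hσ hbσ).const_mul _
  rw [euclideanLaplacian_eq_of_eventuallyEq_comp_log_norm (norm_pos_iff.mp (by linarith)) hφ hG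
    ((hasDerivAt_deriv_rpow_neg_sub_rpow hs hb).const_mul _), add_sub_cancel_right,
    show p + 1 - 2 = p - 1 by ring, rpow_sub_one hb.ne']
  field_simp
  ring

theorem weight_mul_deriv_barrier_le_laplacian {ρx K₁ K₂ E : ℝ} (hβ : 0 < β) (hp : 0 < p)
    (hC : 0 < C) (hγ : 0 ≤ γ) (hpm : p * (m - 1) = 1)
    (hCE : C ^ (m - 1) * ((p + 1) * β) = p * E) (hEK : E * (n - 2) = K₁)
    (hγK : K₂ ≤ E * p * γ ^ β⁻¹) (hx : 1 < ‖x‖) (hT : 1 < t + t₀)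
    (hlow : K₁ / (‖x‖ ^ 2 * log ‖x‖ ^ (β + 1)) ≤ ρx)
    (hup : ρx ≤ K₂ / (‖x‖ ^ 2 * log ‖x‖ ^ (β + 1)))
    (hb : 0 < barrierBracket γ t₀ β x t) :
    ρx * deriv (fun τ => barrier C γ t₀ β p x τ) t
      ≤ euclideanLaplacian n (fun y => barrier C γ t₀ β p y t ^ m) x := by
  have hs : 0 < log ‖x‖ := log_pos hx
  have hL : 0 < log (t + t₀) := log_pos hT
  have hE : 0 ≤ E := by
    have : 0 < p * E := hCE ▸ by positivity
    exact (pos_of_mul_pos_right this hp.le).le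
  have hCm : C ^ m * ((p + 1) * β) = C * (p * E) := by
    rw [← hCE, rpow_sub_one hC.ne']
    field_simp
  have hweight (K : ℝ) : K / (‖x‖ ^ 2 * log ‖x‖ ^ (β + 1)) = K * log ‖x‖ ^ (-β - 1) / ‖x‖ ^ 2 := by
    rw [show -β - 1 = -(β + 1) by ring, rpow_neg hs.le]
    field_simp
  have hgain : K₂ * γ * log (t + t₀) ^ (-β - 1) ≤ E * p * log ‖x‖ ^ (-β - 1) := calc
    K₂ * γ * log (t + t₀) ^ (-β - 1) ≤ E * p * γ ^ β⁻¹ * γ * log (t + t₀) ^ (-β - 1) := by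
      gcongr
    _ = E * p * (γ * γ ^ β⁻¹ * log (t + t₀) ^ (-β - 1)) := by ring
    _ ≤ E * p * log ‖x‖ ^ (-β - 1) := by
      gcongr
      exact rpow_mul_mul_rpow_neg_sub_one_le hβ hγ hL hs (sub_pos.mp hb).le
  have key := weight_mul_le_of_bounds ((hweight K₁).symm.trans_le hlow)
    (hup.trans_eq (hweight K₂)) hgain hEK (by positivity) hE hβ.le hγ (by positivity)
    (by positivity) (by positivity : 0 ≤ log ‖x‖ ^ (-β - 2)) hb.le
  rw [(hasDerivAt_barrier_time hT hb).deriv,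
    euclideanLaplacian_barrier_rpow hC hpm hx (by linarith) hb, hCm]
  have hX : 0 ≤ C * p * (t + t₀) ^ (-p - 1) * barrierBracket γ t₀ β x t ^ (p - 1) := by
    have := hb.le
    positivity
  calc _ = C * p * (t + t₀) ^ (-p - 1) * barrierBracket γ t₀ β x t ^ (p - 1) *
        (ρx * (γ * β * log (t + t₀) ^ (-β - 1) - barrierBracket γ t₀ β x t)) := by ring
    _ ≤ _ := mul_le_mul_of_nonneg_left key hX
    _ = _ := by ring

end Barrier

theorem stmt_16_general (n : ℕ) (hn : 3 ≤ n) (m ν K₁ K₂ : ℝ)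
    (hm : 1 < m) (hν : 1 < ν) (hK₁ : 0 < K₁) (hK₂ : 0 < K₂)
    (ρ : EuclideanSpace ℝ (Fin n) → ℝ)
    (hρlow : ∀ x, 2 ≤ ‖x‖ → K₁ / (‖x‖ ^ 2 * (Real.log ‖x‖) ^ ν) ≤ ρ x)
    (hρup : ∀ x, 2 ≤ ‖x‖ → ρ x ≤ K₂ / (‖x‖ ^ 2 * (Real.log ‖x‖) ^ ν)) :
    ∃ C₁ > (0:ℝ), ∃ γ₁ > (0:ℝ), ∃ R₀ > (2:ℝ), ∃ t₀ > Real.exp 1,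
      ∀ U : EuclideanSpace ℝ (Fin n) → ℝ → ℝ,
        (U = fun x t => C₁ * (t + t₀) ^ (-1 / (m - 1)) *
          (max ((Real.log ‖x‖) ^ (-(ν - 1))
            - γ₁ * (Real.log (t + t₀)) ^ (-(ν - 1))) 0) ^ (1 / (m - 1))) →
        ∀ x : EuclideanSpace ℝ (Fin n), R₀ < ‖x‖ → ∀ t : ℝ, 0 < t →
          γ₁ * (Real.log (t + t₀)) ^ (-(ν - 1)) < (Real.log ‖x‖) ^ (-(ν - 1)) →
          ρ x * deriv (fun τ : ℝ => U x τ) t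
            ≤ euclideanLaplacian n (fun y => U y t ^ m) x := by
  obtain ⟨β, hβ, rfl⟩ : ∃ β, 0 < β ∧ ν = β + 1 := ⟨ν - 1, by linarith, by ring⟩
  have hn2 : (0 : ℝ) < n - 2 := by
    have : (3 : ℝ) ≤ n := by exact_mod_cast hn
    linarith
  set p := 1 / (m - 1)
  have hp : 0 < p := one_div_pos.2 (by linarith)
  have hpm : p * (m - 1) = 1 := one_div_mul_cancel (by linarith)
  set E := K₁ / (n - 2)
  have hE : 0 < E := div_pos hK₁ hn2
  have hC_base : 0 < p * E / ((p + 1) * β) := by positivity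
  refine ⟨(p * E / ((p + 1) * β)) ^ p, rpow_pos_of_pos hC_base p, (K₂ / (E * p)) ^ β,
    by positivity, 3, by norm_num, exp 2, exp_lt_exp.2 one_lt_two, ?_⟩
  rintro U rfl x hx t ht hregion
  simp only [add_sub_cancel_right, neg_div] at hregion ⊢
  exact weight_mul_deriv_barrier_le_laplacian hβ hp (rpow_pos_of_pos hC_base p) (by positivity)
    hpm (by rw [← rpow_mul hC_base.le, hpm, rpow_one, div_mul_cancel₀ _ (by positivity)])
    (div_mul_cancel₀ _ hn2.ne')
    (by rw [rpow_rpow_inv (by positivity) hβ.ne', mul_div_cancel₀ _ (by positivity)])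
    (by linarith) (by linarith [one_lt_exp_iff.2 two_pos]) (hρlow x (by linarith))
    (hρup x (by linarith)) (sub_pos.2 hregion)

/-- Subsolution barrier for the weighted Euclidean porous medium equation
(proof of Theorem 4.1 (i), lower bound): for a weight
`ρ(x) ≍ |x|^{-2} (log|x|)^{-ν}` with `ν > 1`, the function
`u̲(x,t) = C₁ (t+t₀)^{-1/(m-1)} [(log|x|)^{-(ν-1)} − γ₁ (log(t+t₀))^{-(ν-1)}]₊^{1/(m-1)}`
satisfies `ρ ∂_t u̲ ≤ Δ(u̲^m)` in the region `|x| > R₀`, `t > 0` where its bracket is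
positive, for suitable constants `C₁, γ₁ > 0`, `R₀ > 2`, `t₀ > e`. -/
theorem stmt_16 (n : ℕ) (hn : 3 ≤ n) (m ν K₁ K₂ : ℝ)
    (hm : 1 < m) (hν : 1 < ν) (hK₁ : 0 < K₁) (hK₂ : 0 < K₂) (hK : K₁ ≤ K₂)
    (ρ : EuclideanSpace ℝ (Fin n) → ℝ) (hρmeas : Measurable ρ) (hρpos : ∀ x, 0 < ρ x)
    (hρlow : ∀ x, 2 ≤ ‖x‖ → K₁ / (‖x‖ ^ 2 * (Real.log ‖x‖) ^ ν) ≤ ρ x)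
    (hρup : ∀ x, 2 ≤ ‖x‖ → ρ x ≤ K₂ / (‖x‖ ^ 2 * (Real.log ‖x‖) ^ ν)) :
    ∃ C₁ > (0:ℝ), ∃ γ₁ > (0:ℝ), ∃ R₀ > (2:ℝ), ∃ t₀ > Real.exp 1,
      ∀ U : EuclideanSpace ℝ (Fin n) → ℝ → ℝ,
        (U = fun x t => C₁ * (t + t₀) ^ (-1 / (m - 1)) *
          (max ((Real.log ‖x‖) ^ (-(ν - 1))
            - γ₁ * (Real.log (t + t₀)) ^ (-(ν - 1))) 0) ^ (1 / (m - 1))) →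
        ∀ x : EuclideanSpace ℝ (Fin n), R₀ < ‖x‖ → ∀ t : ℝ, 0 < t →
          γ₁ * (Real.log (t + t₀)) ^ (-(ν - 1)) < (Real.log ‖x‖) ^ (-(ν - 1)) →
          ρ x * deriv (fun τ : ℝ => U x τ) t
            ≤ euclideanLaplacian n (fun y => U y t ^ m) x :=
  stmt_16_general n hn m ν K₁ K₂ hm hν hK₁ hK₂ ρ hρlow hρup
end
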